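/- arXiv:2103.10622 — 6 statements merged into one kernel-verified Lean document; each statement's English description precedes it below -/
import Mathlib

section
/- For integers m ≥ 2, twice the Euler sum of harmonic numbers satisfies: 2·∑_{n=1}^∞ H_n/n^m = (m+2)·ζ(m+1) − ∑_{n=1}^{m−2} ζ(m−n)·ζ(n+1). -/
/-!
Euler's argument through the double zeta values `ζ(a, b) = ∑_{n > k ≥ 1} n⁻ᵃ k⁻ᵇ`.
Splitting the square `n, k ≥ 1` along its diagonal gives the stuffle relation
`ζ(a) ζ(b) = ζ(a + b) + ζ(a, b) + ζ(b, a)`, and `H_n = H_{n-1} + 1/n` gives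
`∑ H_n / n^m = ζ(m + 1) + ζ(m, 1)`. Summing the geometric progression in `a` and writing
`n = k + d`, the identity `∑_{d ≥ 1} 1 / (d (k + d)) = H_k / k` turns `∑_{a=2}^{m} ζ(a, m + 1 - a)`
into `∑ H_k / k^m - ζ(m, 1)`, so this sum equals `ζ(m + 1)`. Applying the stuffle relation to each
product `ζ(m - n) ζ(n + 1)` and then this sum formula leaves only `ζ(m + 1)` and `ζ(m, 1)`.
-/

/-- The `n`-th harmonicR number `H_n = ∑_{j=1}^n 1/j`, as a real number. -/
noncomputable def harmonicR (n : ℕ) : ℝ := ∑ j ∈ Finset.Icc 1 n, (1 : ℝ) / j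

/-- `ζ(s) = ∑_{n=1}^∞ 1/n^s`. -/
noncomputable def zetaR (s : ℕ) : ℝ := ∑' n : ℕ, (1 : ℝ) / (n + 1) ^ s

open Filter Finset Topology

lemma harmonicR_eq_sum_range (n : ℕ) : harmonicR n = ∑ i ∈ range n, 1 / ((i : ℝ) + 1) := by
  have : harmonicR n = harmonic n := by simp [harmonicR, harmonic_eq_sum_Icc]
  simp [this, harmonic]

lemma harmonicR_succ (n : ℕ) : harmonicR (n + 1) = harmonicR n + 1 / ((n : ℝ) + 1) := by
  simp only [harmonicR_eq_sum_range, sum_range_succ]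

lemma summable_one_div_add_one_pow {s : ℕ} (hs : 2 ≤ s) :
    Summable (fun n : ℕ => 1 / ((n : ℝ) + 1) ^ s) := by
  simpa using (summable_nat_add_iff 1).2 (Real.summable_one_div_nat_pow.2 hs)

lemma hasSum_sub_add_of_antitone {f : ℕ → ℝ} (hf : Antitone f) (hf0 : Tendsto f atTop (𝓝 0))
    (K : ℕ) : HasSum (fun n => f n - f (n + K)) (∑ i ∈ range K, f i) := by
  rw [hasSum_iff_tendsto_nat_of_nonneg fun n => sub_nonneg.2 (hf (Nat.le_add_right n K))]
  have hpartial (N : ℕ) : ∑ n ∈ range N, (f n - f (n + K)) =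
      ∑ i ∈ range K, f i - ∑ i ∈ range K, f (N + i) := by
    have h := sum_range_add f N K
    rw [add_comm N K, sum_range_add] at h
    simp only [sum_sub_distrib, add_comm _ K]
    linear_combination -h
  have htail : Tendsto (fun N => ∑ i ∈ range K, f (N + i)) atTop (𝓝 0) := by
    simpa using tendsto_finsetSum (range K) fun i _ => hf0.comp (tendsto_add_atTop_nat i)
  simpa [hpartial] using tendsto_const_nhds.sub htail

lemma antitone_one_div_add {c : ℝ} (hc : 0 < c) : Antitone (fun n : ℕ => 1 / ((n : ℝ) + c)) :=
  fun _ _ hab => one_div_le_one_div_of_le (by positivity) (by gcongr)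

lemma tendsto_one_div_add (c : ℝ) : Tendsto (fun n : ℕ => 1 / ((n : ℝ) + c)) atTop (𝓝 0) := by
  simpa only [one_div, Function.comp_def] using
    tendsto_inv_atTop_zero.comp (tendsto_atTop_add_const_right _ c tendsto_natCast_atTop_atTop)

lemma hasSum_one_div_sub_one_div_add (K : ℕ) :
    HasSum (fun k : ℕ => 1 / ((k : ℝ) + 1) - 1 / ((k : ℝ) + 1 + K)) (harmonicR K) := by
  rw [harmonicR_eq_sum_range]
  convert hasSum_sub_add_of_antitone (antitone_one_div_add one_pos) (tendsto_one_div_add 1) K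
    using 3 with k
  push_cast
  ring

lemma sum_range_one_div_pow_mul_pow_mul_sub {x y : ℝ} (hx : x ≠ 0) (hy : y ≠ 0) (n : ℕ) :
    (∑ j ∈ range n, 1 / (x ^ (j + 2) * y ^ (n - j))) * (x - y) =
      1 / (x * y ^ n) - 1 / x ^ (n + 1) := by
  have hterm (j : ℕ) (hj : j ∈ range n) : 1 / (x ^ (j + 2) * y ^ (n - j)) * (x - y) =
      1 / (x ^ (j + 1) * y ^ (n - j)) - 1 / (x ^ (j + 1 + 1) * y ^ (n - (j + 1))) := by
    rw [show n - j = n - (j + 1) + 1 by have := mem_range.1 hj; omega]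
    field_simp
    ring
  rw [sum_mul, sum_congr rfl hterm, sum_range_sub' (fun j => 1 / (x ^ (j + 1) * y ^ (n - j)))]
  simp

section LowerTriangle

def lowerTriangleEquiv : ℕ × ℕ ≃ {p : ℕ × ℕ | p.2 < p.1} where
  toFun q := ⟨(q.1 + q.2 + 1, q.1), by simp only [Set.mem_ofPred_eq]; omega⟩
  invFun p := (p.1.2, p.1.1 - p.1.2 - 1)
  left_inv q := Prod.ext rfl (by dsimp only; omega)
  right_inv := fun ⟨p, hp⟩ => by
    simp only [Set.mem_ofPred_eq] at hp
    exact Subtype.ext (Prod.ext (by dsimp only; omega) rfl)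

variable {α : Type*} [AddCommMonoid α] [TopologicalSpace α]

lemma hasSum_indicator_lowerTriangle_iff (F : ℕ × ℕ → α) (a : α) :
    HasSum ({p : ℕ × ℕ | p.2 < p.1}.indicator F) a ↔
      HasSum (fun q : ℕ × ℕ => F (q.1 + q.2 + 1, q.1)) a := by
  rw [← hasSum_subtype_iff_indicator, ← lowerTriangleEquiv.hasSum_iff]
  rfl

lemma summable_indicator_lowerTriangle_iff (F : ℕ × ℕ → α) :
    Summable ({p : ℕ × ℕ | p.2 < p.1}.indicator F) ↔
      Summable (fun q : ℕ × ℕ => F (q.1 + q.2 + 1, q.1)) := by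
  rw [← summable_subtype_iff_indicator, ← lowerTriangleEquiv.summable_iff]
  rfl

end LowerTriangle

lemma tsum_eq_tsum_diag_add_tsum_lowerTriangle {G : Type*} [AddCommGroup G] [UniformSpace G]
    [IsUniformAddGroup G] [CompleteSpace G] [T2Space G] {F : ℕ × ℕ → G} (hF : Summable F) :
    ∑' p, F p = ∑' n, F (n, n) + ∑' p, {p : ℕ × ℕ | p.2 < p.1}.indicator F p +
      ∑' p, {p : ℕ × ℕ | p.2 < p.1}.indicator (F ∘ Prod.swap) p := by
  set D := {p : ℕ × ℕ | p.1 = p.2}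
  set L := {p : ℕ × ℕ | p.2 < p.1}
  set U := {p : ℕ × ℕ | p.1 < p.2}
  have hsplit (p : ℕ × ℕ) : F p = D.indicator F p + L.indicator F p + U.indicator F p := by
    rcases lt_trichotomy p.1 p.2 with h | h | h
    · simp [D, L, U, Set.indicator, h, h.ne, h.asymm]
    · simp [D, L, U, Set.indicator, h]
    · simp [D, L, U, Set.indicator, h, h.ne', h.asymm]
  have hdiag : ∑' p, D.indicator F p = ∑' n, F (n, n) := by
    rw [← Function.Injective.tsum_eq (g := fun n : ℕ => (n, n)) (fun _ _ h => congrArg Prod.fst h)]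
    · simp [D]
    · intro p hp
      have : p.1 = p.2 := by by_contra h; exact hp (by simp [D, h])
      exact ⟨p.1, by ext <;> simp [this]⟩
  have hupper : ∑' p, U.indicator F p = ∑' p, L.indicator (F ∘ Prod.swap) p := by
    rw [← (Equiv.prodComm ℕ ℕ).tsum_eq]
    rfl
  rw [tsum_congr hsplit, (hF.indicator _).add (hF.indicator _) |>.tsum_add (hF.indicator _),
    (hF.indicator _).tsum_add (hF.indicator _), hdiag, hupper]

noncomputable def doubleZetaTerm (a b : ℕ) (p : ℕ × ℕ) : ℝ :=
  1 / (((p.1 : ℝ) + 1) ^ a * ((p.2 : ℝ) + 1) ^ b)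

-- `ζ(a, b) = ∑_{n > k ≥ 1} n⁻ᵃ k⁻ᵇ`, the pair `(n, k)` being stored as `(n - 1, k - 1)`.
noncomputable def doubleZeta (a b : ℕ) : ℝ :=
  ∑' p, {p : ℕ × ℕ | p.2 < p.1}.indicator (doubleZetaTerm a b) p

lemma doubleZetaTerm_nonneg (a b : ℕ) (p : ℕ × ℕ) : 0 ≤ doubleZetaTerm a b p := by
  unfold doubleZetaTerm
  positivity

lemma doubleZetaTerm_anti {a a' b b' : ℕ} (ha : a' ≤ a) (hb : b' ≤ b) (p : ℕ × ℕ) :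
    doubleZetaTerm a b p ≤ doubleZetaTerm a' b' p := by
  have h1 : (1 : ℝ) ≤ p.1 + 1 := by simp
  have h2 : (1 : ℝ) ≤ p.2 + 1 := by simp
  unfold doubleZetaTerm
  exact one_div_le_one_div_of_le (by positivity) (by gcongr)

lemma summable_doubleZeta_two_one :
    Summable ({p : ℕ × ℕ | p.2 < p.1}.indicator (doubleZetaTerm 2 1)) := by
  rw [summable_indicator_lowerTriangle_iff,
    summable_prod_of_nonneg fun q => doubleZetaTerm_nonneg 2 1 _]
  -- Column `k` is dominated by the telescoping series `∑_d 1 / ((k + d + 1) (k + d + 2) (k + 1))`.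
  have hcol (k : ℕ) : HasSum (fun d : ℕ => (1 / ((d : ℝ) + (k + 1)) - 1 / ((d + 1 : ℕ) + (k + 1)))
      / (k + 1)) (1 / ((k : ℝ) + 1) ^ 2) := by
    have h := (hasSum_sub_add_of_antitone (antitone_one_div_add (c := (k : ℝ) + 1) (by positivity))
      (tendsto_one_div_add _) 1).div_const ((k : ℝ) + 1)
    rwa [sum_range_one, Nat.cast_zero, zero_add, div_div, ← sq] at h
  have hle (k d : ℕ) : doubleZetaTerm 2 1 (k + d + 1, k) ≤
      (1 / ((d : ℝ) + (k + 1)) - 1 / ((d + 1 : ℕ) + (k + 1))) / (k + 1) := by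
    have h : (1 / ((d : ℝ) + (k + 1)) - 1 / ((d + 1 : ℕ) + (k + 1))) / (k + 1) =
        1 / ((d + k + 1) * (d + k + 2) * (k + 1)) := by
      push_cast
      field_simp
      ring
    rw [h, doubleZetaTerm]
    push_cast
    exact one_div_le_one_div_of_le (by positivity) (by nlinarith)
  refine ⟨fun k => .of_nonneg_of_le (fun d => doubleZetaTerm_nonneg 2 1 _) (hle k) (hcol k).summable,
    .of_nonneg_of_le (fun k => tsum_nonneg fun d => doubleZetaTerm_nonneg 2 1 _) (fun k => ?_)
      (summable_one_div_add_one_pow le_rfl)⟩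
  exact (hcol k).tsum_eq ▸ Summable.tsum_le_tsum (hle k)
    (.of_nonneg_of_le (fun d => doubleZetaTerm_nonneg 2 1 _) (hle k) (hcol k).summable)
    (hcol k).summable

lemma summable_doubleZeta {a b : ℕ} (ha : 2 ≤ a) (hb : 1 ≤ b) :
    Summable ({p : ℕ × ℕ | p.2 < p.1}.indicator (doubleZetaTerm a b)) :=
  summable_doubleZeta_two_one.of_nonneg_of_le
    (Set.indicator_nonneg fun p _ => doubleZetaTerm_nonneg a b p)
    (Set.indicator_le_indicator <| doubleZetaTerm_anti ha hb ·)

lemma zetaR_mul_zetaR {a b : ℕ} (ha : 2 ≤ a) (hb : 2 ≤ b) :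
    zetaR a * zetaR b = zetaR (a + b) + doubleZeta a b + doubleZeta b a := by
  have hsa := summable_one_div_add_one_pow ha
  have hsb := summable_one_div_add_one_pow hb
  have hterm : (fun p : ℕ × ℕ => 1 / ((p.1 : ℝ) + 1) ^ a * (1 / ((p.2 : ℝ) + 1) ^ b)) =
      doubleZetaTerm a b := by
    funext p
    rw [doubleZetaTerm, one_div_mul_one_div]
  have hprod : Summable (doubleZetaTerm a b) :=
    hterm ▸ hsa.mul_of_nonneg hsb (fun n => by positivity) (fun n => by positivity)
  have hdiag (n : ℕ) : doubleZetaTerm a b (n, n) = 1 / ((n : ℝ) + 1) ^ (a + b) := by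
    rw [doubleZetaTerm, pow_add]
  have hswap : doubleZetaTerm a b ∘ Prod.swap = doubleZetaTerm b a := by
    funext p
    simp [doubleZetaTerm, mul_comm]
  rw [zetaR, zetaR, hsa.tsum_mul_tsum hsb (hterm ▸ hprod), hterm,
    tsum_eq_tsum_diag_add_tsum_lowerTriangle hprod, hswap, zetaR, doubleZeta, doubleZeta]
  simp only [hdiag]

lemma hasSum_harmonicR_div_pow {m : ℕ} (hm : 2 ≤ m) :
    HasSum (fun n : ℕ => harmonicR n / ((n : ℝ) + 1) ^ m) (doubleZeta m 1) := by
  refine (summable_doubleZeta hm le_rfl).hasSum.prod_fiberwise fun n => ?_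
  rw [harmonicR_eq_sum_range, sum_div]
  have hrow : ∀ k ∉ range n, {p : ℕ × ℕ | p.2 < p.1}.indicator (doubleZetaTerm m 1) (n, k) = 0 :=
    fun k hk => Set.indicator_of_notMem (by simpa using hk) _
  convert hasSum_sum_of_ne_finset_zero (L := .unconditional ℕ) hrow using 1
  refine sum_congr rfl fun k hk => ?_
  rw [Set.indicator_of_mem (by simpa using hk), doubleZetaTerm, pow_one, div_div, mul_comm]

lemma hasSum_harmonicR_succ_div_pow {m : ℕ} (hm : 2 ≤ m) :
    HasSum (fun n : ℕ => harmonicR (n + 1) / ((n : ℝ) + 1) ^ m)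
      (zetaR (m + 1) + doubleZeta m 1) := by
  rw [zetaR]
  convert (summable_one_div_add_one_pow (by omega : 2 ≤ m + 1)).hasSum.add
    (hasSum_harmonicR_div_pow hm) using 1
  funext n
  rw [harmonicR_succ, pow_succ]
  field_simp
  ring

lemma sum_range_doubleZetaTerm (n i d : ℕ) :
    ∑ j ∈ range n, doubleZetaTerm (j + 2) (n - j) (i + d + 1, i) =
      1 / ((((i + d + 1 : ℕ) : ℝ) + 1) * ((i : ℝ) + 1) ^ n * ((d : ℝ) + 1)) -
        1 / ((((i + d + 1 : ℕ) : ℝ) + 1) ^ (n + 1) * ((d : ℝ) + 1)) := by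
  have h := sum_range_one_div_pow_mul_pow_mul_sub (x := ((i + d + 1 : ℕ) : ℝ) + 1)
    (y := (i : ℝ) + 1) (by positivity) (by positivity) n
  have hxy : ((i + d + 1 : ℕ) : ℝ) + 1 - ((i : ℝ) + 1) = (d : ℝ) + 1 := by
    push_cast
    ring
  rw [hxy, ← eq_div_iff (by positivity)] at h
  simp only [doubleZetaTerm, h]
  field_simp

lemma sum_range_doubleZeta {n : ℕ} (hn : 1 ≤ n) :
    ∑ j ∈ range n, doubleZeta (j + 2) (n - j) = zetaR (n + 2) := by
  set D1 : ℕ × ℕ → ℝ := fun q =>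
    1 / ((((q.1 + q.2 + 1 : ℕ) : ℝ) + 1) * ((q.1 : ℝ) + 1) ^ n * ((q.2 : ℝ) + 1))
  set D2 : ℕ × ℕ → ℝ := fun q =>
    1 / ((((q.1 + q.2 + 1 : ℕ) : ℝ) + 1) ^ (n + 1) * ((q.2 : ℝ) + 1))
  have hgeom (q : ℕ × ℕ) :
      ∑ j ∈ range n, doubleZetaTerm (j + 2) (n - j) (q.1 + q.2 + 1, q.1) = D1 q - D2 q :=
    sum_range_doubleZetaTerm n q.1 q.2
  have hdiff : HasSum (fun q => D1 q - D2 q) (∑ j ∈ range n, doubleZeta (j + 2) (n - j)) := by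
    simp_rw [← hgeom]
    exact hasSum_sum fun j hj => (hasSum_indicator_lowerTriangle_iff _ _).1
      (summable_doubleZeta (by omega) (by have := mem_range.1 hj; omega)).hasSum
  have hD2 : HasSum D2 (doubleZeta (n + 1) 1) := by
    rw [doubleZeta, ← (Equiv.prodComm ℕ ℕ).hasSum_iff]
    convert (hasSum_indicator_lowerTriangle_iff _ _).1
      (summable_doubleZeta (a := n + 1) (b := 1) (by omega) le_rfl).hasSum using 1
    funext q
    simp [D2, doubleZetaTerm, add_comm]
  have hrow (i : ℕ) :
      HasSum (fun d => D1 (i, d)) (harmonicR (i + 1) / ((i : ℝ) + 1) ^ (n + 1)) := by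
    refine ((hasSum_one_div_sub_one_div_add (i + 1)).div_const _).congr_fun fun d => ?_
    simp only [D1]
    push_cast
    field_simp
    ring
  have hD1 := (hdiff.add hD2).prod_fiberwise (by simpa only [sub_add_cancel] using hrow)
  have := hD1.unique (hasSum_harmonicR_succ_div_pow (m := n + 1) (by omega))
  linarith

lemma sum_range_zetaR_mul_zetaR (k : ℕ) :
    ∑ j ∈ range k, zetaR (k + 1 - j) * zetaR (j + 2) =
      k * zetaR (k + 3) + 2 * ∑ j ∈ range k, doubleZeta (j + 2) (k + 1 - j) := by
  have hstuffle (j : ℕ) (hj : j ∈ range k) : zetaR (k + 1 - j) * zetaR (j + 2) =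
      zetaR (k + 3) + doubleZeta (k + 1 - j) (j + 2) + doubleZeta (j + 2) (k + 1 - j) := by
    have := mem_range.1 hj
    rw [zetaR_mul_zetaR (by omega) (by omega), show k + 1 - j + (j + 2) = k + 3 by omega]
  have hreflect : ∑ j ∈ range k, doubleZeta (k + 1 - j) (j + 2) =
      ∑ j ∈ range k, doubleZeta (j + 2) (k + 1 - j) := by
    rw [← sum_range_reflect]
    refine sum_congr rfl fun j hj => ?_
    have := mem_range.1 hj
    congr 1 <;> omega
  rw [sum_congr rfl hstuffle, sum_add_distrib, sum_add_distrib, hreflect, sum_const, card_range,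
    nsmul_eq_mul]
  ring

theorem euler_sum_harmonicR (m : ℕ) (hm : 2 ≤ m) :
    2 * ∑' n : ℕ, harmonicR (n + 1) / (n + 1 : ℝ) ^ m =
      (m + 2) * zetaR (m + 1) -
        ∑ n ∈ Finset.Icc 1 (m - 2), zetaR (m - n) * zetaR (n + 1) := by
  obtain ⟨k, rfl⟩ := Nat.exists_eq_add_of_le' hm
  have hsum := sum_range_doubleZeta (n := k + 1) le_add_self
  rw [sum_range_succ, Nat.add_sub_cancel_left] at hsum
  have hshift : ∑ n ∈ Icc 1 (k + 2 - 2), zetaR (k + 2 - n) * zetaR (n + 1) =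
      ∑ j ∈ range k, zetaR (k + 1 - j) * zetaR (j + 2) := by
    rw [Nat.add_sub_cancel, range_eq_Ico]
    refine (sum_Ico_add' (fun n => zetaR (k + 2 - n) * zetaR (n + 1)) 0 k 1).symm.trans
      (sum_congr rfl fun j _ => ?_)
    rw [show k + 2 - (j + 1) = k + 1 - j by omega]
  rw [(hasSum_harmonicR_succ_div_pow hm).tsum_eq, hshift, sum_range_zetaR_mul_zetaR]
  push_cast
  linarith
end

section
/- The coefficients B(r,t,m) of T(r,n,t) = ∑_{m=0}^{r−1} B(r,t,m)·n^m satisfy B(r+1,t,0) = −∑_{j=0}^{r−1} (t−1)^{1+j} · ∑_{m=j}^{r−1} (B(r,t,m)/(m+1))·C(m+1, m−j)·B_{m−j}^+. -/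
/-- The nested sum `T(r,n,t)`: `T(1,n,t) = 1`, `T(r+1,n,t) = ∑_{k=t}^n T(r,k,t)`.
    (`Tsum 0` is an unused dummy value.) -/
def Tsum : ℕ → ℕ → ℕ → ℚ
  | 0, _, _ => 0
  | 1, _, _ => 1
  | r + 2, n, t => ∑ k ∈ Finset.Icc t n, Tsum (r + 1) k t

/-!
Summing `T(r,k,t) = ∑ₘ B(r,t,m) kᵐ` over `t ≤ k ≤ n` and writing each `∑_{k=t}^n kᵐ` as the
Faulhaber polynomial `∑_{k=1}^n kᵐ` (which vanishes at `n = 0`) minus `∑_{k=1}^{t-1} kᵐ` exhibits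
`T(r+1,n,t)` as a polynomial in `n` with constant term `-∑ₘ B(r,t,m) ∑_{k=1}^{t-1} kᵐ`.
Both sides agree at infinitely many `n`, so this constant term is `B(r+1,t,0)`; Faulhaber's formula
for `∑_{k=1}^{t-1} kᵐ` in terms of `B_i^+` then gives the stated expression.
-/

open Polynomial Finset

lemma Tsum_succ {r : ℕ} (hr : 1 ≤ r) (n t : ℕ) :
    Tsum (r + 1) n t = ∑ k ∈ Icc t n, Tsum r k t := by
  obtain ⟨s, rfl⟩ : ∃ s, r = s + 1 := ⟨r - 1, by omega⟩
  rfl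

theorem Polynomial.eq_of_eval_natCast_eq {R : Type*} [CommRing R] [IsDomain R] [CharZero R]
    {p q : R[X]} (t : ℕ) (h : ∀ n, t ≤ n → p.eval (n : R) = q.eval (n : R)) : p = q := by
  refine eq_of_infinite_eval_eq p q
    (((Set.Ici_infinite t).image Nat.cast_injective.injOn).mono ?_)
  rintro _ ⟨n, hn, rfl⟩
  exact h n hn

noncomputable def faulhaber (p : ℕ) : ℚ[X] :=
  ∑ i ∈ range (p + 1), C (bernoulli' i * (p + 1).choose i / (p + 1)) * X ^ (p + 1 - i)

theorem faulhaber_eval_natCast (n p : ℕ) :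
    (faulhaber p).eval (n : ℚ) = ∑ k ∈ Ico 1 (n + 1), (k : ℚ) ^ p := by
  rw [sum_Ico_pow, faulhaber, eval_finsetSum]
  refine sum_congr rfl fun i _ => ?_
  simp only [eval_mul, eval_C, eval_pow, eval_X]
  ring

theorem faulhaber_eval_zero (p : ℕ) : (faulhaber p).eval 0 = 0 := by
  simpa using faulhaber_eval_natCast 0 p

theorem sum_Icc_pow_eq_faulhaber_sub {t n : ℕ} (ht : 1 ≤ t) (htn : t ≤ n + 1) (p : ℕ) :
    ∑ k ∈ Icc t n, (k : ℚ) ^ p = (faulhaber p).eval (n : ℚ) - ∑ k ∈ Ico 1 t, (k : ℚ) ^ p := by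
  rw [faulhaber_eval_natCast, ← sum_Ico_consecutive _ ht htn, Ico_add_one_right_eq_Icc]
  ring

theorem coeff_zero_eq_of_eval_eq_sum_Icc {a b : ℕ → ℚ} {r t : ℕ} (ht : 1 ≤ t)
    (h : ∀ n, t ≤ n → ∑ m ∈ range (r + 1), a m * (n : ℚ) ^ m =
      ∑ k ∈ Icc t n, ∑ m ∈ range r, b m * (k : ℚ) ^ m) :
    a 0 = -∑ m ∈ range r, b m * ∑ k ∈ Ico 1 t, (k : ℚ) ^ m := by
  set p : ℚ[X] := ∑ m ∈ range (r + 1), C (a m) * X ^ m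
  set q : ℚ[X] := ∑ m ∈ range r, C (b m) * (faulhaber m - C (∑ k ∈ Ico 1 t, (k : ℚ) ^ m))
  have hpq : p = q := eq_of_eval_natCast_eq t fun n htn => by
    simp only [p, q, eval_finsetSum, eval_mul, eval_C, eval_pow, eval_X, eval_sub]
    rw [h n htn, sum_comm]
    refine sum_congr rfl fun m _ => ?_
    rw [← mul_sum, sum_Icc_pow_eq_faulhaber_sub ht (by omega)]
  have h0 := congrArg (eval 0) hpq
  simpa [p, q, eval_finsetSum, faulhaber_eval_zero, sum_range_succ'] using h0

theorem sum_Ico_one_pow_eq {t : ℕ} (ht : 1 ≤ t) (m : ℕ) :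
    ∑ k ∈ Ico 1 t, (k : ℚ) ^ m = ∑ j ∈ range (m + 1),
      ((t : ℚ) - 1) ^ (1 + j) * ((m + 1).choose (m - j) * bernoulli' (m - j) / (m + 1)) := by
  obtain ⟨s, rfl⟩ : ∃ s, t = s + 1 := ⟨t - 1, by omega⟩
  rw [sum_Ico_pow, ← sum_range_reflect]
  refine sum_congr rfl fun j hj => ?_
  rw [mem_range] at hj
  rw [show m + 1 - (m + 1 - 1 - j) = 1 + j by omega, Nat.add_sub_cancel]
  push_cast
  ring

theorem B_recurrence_zero (B : ℕ → ℕ → ℕ → ℚ)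
    (hB : ∀ r, 1 ≤ r → ∀ t n : ℕ, 1 ≤ t → t ≤ n →
      Tsum r n t = ∑ m ∈ Finset.range r, B r t m * (n : ℚ) ^ m)
    (r : ℕ) (hr : 1 ≤ r) (t : ℕ) (ht : 1 ≤ t) :
    B (r + 1) t 0 =
      -∑ j ∈ Finset.range r, ((t : ℚ) - 1) ^ (1 + j) *
        ∑ m ∈ Finset.Icc j (r - 1),
          B r t m / (m + 1) * (Nat.choose (m + 1) (m - j) : ℚ) * bernoulli' (m - j) := by
  have hsum : ∀ n, t ≤ n → ∑ m ∈ range (r + 1), B (r + 1) t m * (n : ℚ) ^ m =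
      ∑ k ∈ Icc t n, ∑ m ∈ range r, B r t m * (k : ℚ) ^ m := fun n htn => by
    rw [← hB (r + 1) (by omega) t n ht htn, Tsum_succ hr]
    exact sum_congr rfl fun k hk => hB r hr t k ht (mem_Icc.1 hk).1
  rw [coeff_zero_eq_of_eval_eq_sum_Icc ht hsum, neg_inj]
  simp_rw [sum_Ico_one_pow_eq ht, mul_sum]
  rw [sum_comm' (s' := fun j => Icc j (r - 1)) (t' := range r) fun m j => by simp only [mem_range, mem_Icc]; omega]
  exact sum_congr rfl fun _ _ => sum_congr rfl fun _ _ => by ring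
end

section
/- For every positive integer r and 0 ≤ m ≤ r−1, the coefficient B(r,t,m) of T(r,n,t) = ∑_{m=0}^{r−1} B(r,t,m)·n^m is a polynomial in t of degree at most r−m−1. -/
/-!
By the hockey-stick identity, `T(r+1,n,t) = C(n-t+r, r) = (n-t+1)(n-t+2)⋯(n-t+r) / r!`.
Read as a polynomial in `n` with coefficients in `ℚ[t]`, this is a product of `r` factors
`n + (i - t)` whose constant terms are linear in `t`, so by Vieta the coefficient of `n^m` is an
elementary symmetric function of degree `r - m` in linear polynomials of `t`. Since a polynomial
in `n` is determined by its values at the infinitely many `n ≥ t`, these coefficients are `B`.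
-/

open Finset Polynomial

lemma sum_Icc_choose_sub_add (r t n : ℕ) (h : t ≤ n) :
    ∑ k ∈ Icc t n, (k - t + r).choose r = (n - t + r + 1).choose (r + 1) := by
  induction n, h using Nat.le_induction with
  | base => simp
  | succ n hn ih =>
    rw [← Ico_add_one_right_eq_Icc, sum_Ico_succ_top (by omega), Ico_add_one_right_eq_Icc, ih,
      show n + 1 - t + r = n - t + r + 1 by omega, Nat.choose_succ_succ' (n - t + r + 1),
      Nat.add_comm]

lemma Tsum_succ_eq_choose (r t n : ℕ) (h : t ≤ n) :
    Tsum (r + 1) n t = (n - t + r).choose r := by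
  induction r generalizing n with
  | zero => simp [Tsum]
  | succ r ih =>
    rw [Tsum, sum_congr rfl fun k hk => ih k (mem_Icc.mp hk).1]
    exact_mod_cast sum_Icc_choose_sub_add r t n h

lemma degree_coeff_prod_X_add_C_le {R ι : Type*} [CommSemiring R] (s : Finset ι) (c : ι → R[X])
    (hc : ∀ i ∈ s, (c i).degree ≤ 1) {k : ℕ} (hk : k ≤ #s) :
    ((∏ i ∈ s, (X + C (c i))).coeff k).degree ≤ ((#s - k : ℕ) : WithBot ℕ) := by
  rw [prod_X_add_C_coeff s c hk]
  refine (degree_sum_le _ _).trans (Finset.sup_le fun u hu => ?_)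
  obtain ⟨hus, hcard⟩ := mem_powersetCard.mp hu
  calc (∏ i ∈ u, c i).degree ≤ ∑ i ∈ u, (c i).degree := degree_prod_le u c
    _ ≤ #u • (1 : WithBot ℕ) := sum_le_card_nsmul u _ 1 fun i hi => hc i (hus hi)
    _ = ((#s - k : ℕ) : WithBot ℕ) := by simp [hcard]

lemma coeff_eq_of_eval_eq_sum {R : Type*} [CommRing R] [IsDomain R] [CharZero R] {p : R[X]}
    {a : ℕ → R} {r t : ℕ}
    (h : ∀ n : ℕ, t ≤ n → p.eval (n : R) = ∑ m ∈ range r, a m * n ^ m)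
    {m : ℕ} (hm : m < r) : p.coeff m = a m := by
  have hp : p = ∑ m ∈ range r, C (a m) * X ^ m := by
    refine eq_of_infinite_eval_eq _ _ (Set.Infinite.mono ?_
      ((Set.Ici_infinite t).image Nat.cast_injective.injOn))
    rintro _ ⟨n, hn, rfl⟩
    simp [h n hn, eval_finsetSum]
  simp [hp, hm]

/-- `(n - t + 1)(n - t + 2)⋯(n - t + r)`, as a polynomial in `n` over `ℚ[t]`. -/
noncomputable def shiftedRising (r : ℕ) : ℚ[X][X] :=
  ∏ i ∈ range r, (X + C (C ((i : ℚ) + 1) - X))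

lemma eval_map_shiftedRising (r t n : ℕ) (h : t ≤ n) :
    ((shiftedRising r).map (evalRingHom (t : ℚ))).eval (n : ℚ)
      = r.factorial * (n - t + r).choose r := by
  have hfactor : ∀ i : ℕ, (n : ℚ) + ((i : ℚ) + 1 - t) = ((n - t + 1 + i : ℕ) : ℚ) := by
    intro i; push_cast [Nat.cast_sub h]; ring
  simp only [shiftedRising, Polynomial.map_prod, Polynomial.map_add, Polynomial.map_X,
    Polynomial.map_C, eval_prod, eval_add, eval_X, eval_C, coe_evalRingHom, eval_sub, hfactor]
  rw [← Nat.cast_prod, ← Nat.ascFactorial_eq_prod_range,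
    Nat.ascFactorial_eq_factorial_mul_choose]
  push_cast; ring

lemma degree_coeff_shiftedRising_le (r m : ℕ) (hm : m ≤ r) :
    ((shiftedRising r).coeff m).degree ≤ ((r - m : ℕ) : WithBot ℕ) := by
  have := degree_coeff_prod_X_add_C_le (range r) (fun i => C ((i : ℚ) + 1) - X)
    (fun i _ => (degree_sub_le _ _).trans (max_le (degree_C_le.trans zero_le_one) degree_X_le))
    (by simpa using hm)
  rwa [card_range] at this

theorem B_is_polynomial_in_t (B : ℕ → ℕ → ℕ → ℚ)
    (hB : ∀ r, 1 ≤ r → ∀ t n : ℕ, 1 ≤ t → t ≤ n →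
      Tsum r n t = ∑ m ∈ Finset.range r, B r t m * (n : ℚ) ^ m)
    (r : ℕ) (hr : 1 ≤ r) (m : ℕ) (hm : m ≤ r - 1) :
    ∃ P : Polynomial ℚ, P.degree ≤ (r - m - 1 : ℕ) ∧
      ∀ t : ℕ, 1 ≤ t → B r t m = P.eval (t : ℚ) := by
  obtain ⟨r, rfl⟩ : ∃ r', r = r' + 1 := ⟨r - 1, by omega⟩
  have hfac : (r.factorial : ℚ) ≠ 0 := by positivity
  refine ⟨C (r.factorial⁻¹ : ℚ) * (shiftedRising r).coeff m, ?_, fun t ht => ?_⟩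
  · rw [degree_C_mul (inv_ne_zero hfac), show r + 1 - m - 1 = r - m by omega]
    exact degree_coeff_shiftedRising_le r m (by omega)
  · have hcoeff := coeff_eq_of_eval_eq_sum
      (p := C (r.factorial⁻¹ : ℚ) * (shiftedRising r).map (evalRingHom (t : ℚ)))
      (fun n htn => by
        rw [← hB (r + 1) (by omega) t n ht htn, eval_C_mul, eval_map_shiftedRising r t n htn,
          Tsum_succ_eq_choose r t n htn, inv_mul_cancel_left₀ hfac])
      (show m < r + 1 by omega)
    rw [← hcoeff, coeff_C_mul, coeff_map, eval_C_mul, coe_evalRingHom]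
end

section
/- For positive integers n, p, r, the generalized hyperharmonic number admits the decomposition H_n^{(p,r)} = ∑_{m=0}^{r−1} ∑_{j=0}^{r−1−m} a(r,m,j)·n^j·H_n^{(p−m)}, where a(r,m,j) are the rational coefficients defined by T(r,n,t) = ∑_{m=0}^{r−1} ∑_{j=0}^{r−1−m} a(r,m,j)·n^j·t^m, and for ℓ ≥ 0, H_n^{(−ℓ)} := ∑_{x=1}^n x^ℓ. -/
/-- Generalized harmonic numbers with integer exponent:
    `Hz q n = ∑_{x=1}^n x^{-q}` (for `q ≤ 0` this is `∑_{x=1}^n x^{|q|}`). -/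
def Hz (q : ℤ) (n : ℕ) : ℚ := ∑ x ∈ Finset.Icc 1 n, (x : ℚ) ^ (-q)

/-- Generalized hyperharmonic numbers: `Hpr p 1 n = H_n^{(p)} = ∑_{j=1}^n 1/j^p`,
    `Hpr p (r+1) n = ∑_{j=1}^n Hpr p r j`. (`Hpr p 0` is an unused dummy value.) -/
def Hpr : ℕ → ℕ → ℕ → ℚ
  | _, 0, _ => 0
  | p, 1, n => ∑ j ∈ Finset.Icc 1 n, (1 : ℚ) / (j : ℚ) ^ p
  | p, r + 2, n => ∑ j ∈ Finset.Icc 1 n, Hpr p (r + 1) j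

/-!
Unfolding the `r - 1` outer summations of `H_n^{(p,r)}` and exchanging them with the innermost
sum over `t` gives `H_n^{(p,r)} = ∑_{t=1}^n T(r,n,t) / t^p`. Substituting the polynomial expansion
of `T(r,n,t)` and summing each monomial `t^m / t^p = t^{-(p-m)}` over `t` yields `H_n^{(p-m)}`.
-/

open Finset

lemma Hpr_eq_sum_Tsum_div (p : ℕ) {r : ℕ} (hr : 1 ≤ r) (n : ℕ) :
    Hpr p r n = ∑ t ∈ Icc 1 n, Tsum r n t / (t : ℚ) ^ p := by
  induction r, hr using Nat.le_induction generalizing n with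
  | base => simp [Hpr, Tsum, one_div]
  | succ r hr ih =>
    obtain ⟨r, rfl⟩ := Nat.exists_eq_add_of_le' hr
    change ∑ j ∈ Icc 1 n, Hpr p (r + 1) j
      = ∑ t ∈ Icc 1 n, (∑ k ∈ Icc t n, Tsum (r + 1) k t) / (t : ℚ) ^ p
    simp_rw [ih, sum_div]
    exact sum_comm' fun j t => by simp only [mem_Icc]; omega

lemma Hz_natCast_sub (p m n : ℕ) :
    Hz ((p : ℤ) - m) n = ∑ t ∈ Icc 1 n, (t : ℚ) ^ m / (t : ℚ) ^ p := by
  refine sum_congr rfl fun t ht => ?_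
  have ht : (t : ℚ) ≠ 0 := Nat.cast_ne_zero.mpr (by simp only [mem_Icc] at ht; omega)
  rw [neg_sub, zpow_sub₀ ht, zpow_natCast, zpow_natCast]

theorem Hpr_decomposition_general (a : ℕ → ℕ → ℕ → ℚ)
    (ha : ∀ r, 1 ≤ r → ∀ t n : ℕ, 1 ≤ t → t ≤ n →
      Tsum r n t = ∑ m ∈ Finset.range r, ∑ j ∈ Finset.range (r - m),
        a r m j * (n : ℚ) ^ j * (t : ℚ) ^ m)
    (n p r : ℕ) (hr : 1 ≤ r) :
    Hpr p r n = ∑ m ∈ Finset.range r, ∑ j ∈ Finset.range (r - m),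
      a r m j * (n : ℚ) ^ j * Hz ((p : ℤ) - m) n := by
  have expand : ∀ t ∈ Icc 1 n, Tsum r n t / (t : ℚ) ^ p
      = ∑ m ∈ range r, ∑ j ∈ range (r - m),
          a r m j * (n : ℚ) ^ j * ((t : ℚ) ^ m / (t : ℚ) ^ p) := by
    intro t ht
    rw [mem_Icc] at ht
    simp_rw [ha r hr t n ht.1 ht.2, sum_div, mul_div_assoc]
  simp_rw [Hpr_eq_sum_Tsum_div p hr, sum_congr rfl expand, Hz_natCast_sub, mul_sum]
  rw [sum_comm]
  exact sum_congr rfl fun m _ => sum_comm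

theorem Hpr_decomposition (a : ℕ → ℕ → ℕ → ℚ)
    (ha : ∀ r, 1 ≤ r → ∀ t n : ℕ, 1 ≤ t → t ≤ n →
      Tsum r n t = ∑ m ∈ Finset.range r, ∑ j ∈ Finset.range (r - m),
        a r m j * (n : ℚ) ^ j * (t : ℚ) ^ m)
    (n p r : ℕ) (hn : 1 ≤ n) (hp : 1 ≤ p) (hr : 1 ≤ r) :
    Hpr p r n = ∑ m ∈ Finset.range r, ∑ j ∈ Finset.range (r - m),
      a r m j * (n : ℚ) ^ j * Hz ((p : ℤ) - m) n :=
  Hpr_decomposition_general a ha n p r hr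
end

section
/- For positive integers n, p, r, one has H_n^{(p,r)} = ∑_{t=1}^n (1/t^p)·T(r,n,t), where T(r,n,t) = ∑_{k_1=t}^n ∑_{k_2=t}^{k_1} ⋯ ∑_{k_{r−1}=t}^{k_{r−2}} 1. -/
/-!
Induction on `r`: unfolding one level of `Hpr` gives a sum over the triangle `1 ≤ t ≤ j ≤ n`;
summing over `j` first instead produces exactly one more level of the nesting in `T`.
-/

open Finset

theorem Finset.sum_Icc_sum_Icc_comm {α M : Type*} [Preorder α] [LocallyFiniteOrder α]
    [AddCommMonoid M] (a b : α) (f : α → α → M) :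
    ∑ j ∈ Icc a b, ∑ t ∈ Icc a j, f j t = ∑ t ∈ Icc a b, ∑ j ∈ Icc t b, f j t :=
  sum_comm' fun j t => by
    simp only [mem_Icc]
    exact ⟨fun ⟨⟨_, hjb⟩, hat, htj⟩ => ⟨⟨htj, hjb⟩, hat, htj.trans hjb⟩,
      fun ⟨⟨htj, hjb⟩, hat, _⟩ => ⟨⟨hat.trans htj, hjb⟩, hat, htj⟩⟩

theorem Hpr_eq_sum_T_general (n p r : ℕ) :
    Hpr p r n = ∑ t ∈ Finset.Icc 1 n, (1 / (t : ℚ) ^ p) * Tsum r n t := by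
  induction r generalizing n with
  | zero => simp [Hpr, Tsum]
  | succ r ih =>
    rcases r with _ | r
    · simp [Hpr, Tsum]
    calc Hpr p (r + 2) n
        = ∑ j ∈ Icc 1 n, ∑ t ∈ Icc 1 j, 1 / (t : ℚ) ^ p * Tsum (r + 1) j t := by
          simp only [Hpr, ih]
      _ = ∑ t ∈ Icc 1 n, ∑ j ∈ Icc t n, 1 / (t : ℚ) ^ p * Tsum (r + 1) j t :=
          sum_Icc_sum_Icc_comm 1 n _
      _ = ∑ t ∈ Icc 1 n, 1 / (t : ℚ) ^ p * Tsum (r + 2) n t := by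
          simp only [Tsum, mul_sum]

theorem Hpr_eq_sum_T (n p r : ℕ) (hn : 1 ≤ n) (hp : 1 ≤ p) (hr : 1 ≤ r) :
    Hpr p r n = ∑ t ∈ Finset.Icc 1 n, (1 / (t : ℚ) ^ p) * Tsum r n t :=
  Hpr_eq_sum_T_general n p r
end

section
/- For positive integers p ≥ 1 and m ≥ 3, ∑_{n=1}^∞ H_n^{(p,2)}/n^m = S^{+,+}_{p,m} + S^{+,+}_{p,m−1} − S^{+,+}_{p−1,m}, where S^{+,+}_{q,s} = ∑_{n=1}^∞ H_n^{(q)}/n^s and H_n^{(0)} = n (so S^{+,+}_{0,m} = ζ(m−1)). -/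
/-- The classical linear Euler sum `S^{+,+}_{q,s} = ∑_{n=1}^∞ H_n^{(q)}/n^s`. -/
noncomputable def S (q : ℤ) (s : ℕ) : ℝ :=
  ∑' n : ℕ, ((Hz q (n + 1) : ℚ) : ℝ) / (n + 1 : ℝ) ^ s

lemma Hz_succ (q : ℤ) (n : ℕ) : Hz q (n + 1) = Hz q n + ((n + 1 : ℕ) : ℚ) ^ (-q) :=
  Finset.sum_Icc_succ_top (Nat.le_add_left 1 n) _

lemma Hz_nonneg (q : ℤ) (n : ℕ) : 0 ≤ Hz q n :=
  Finset.sum_nonneg fun _ _ => by positivity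

lemma Hz_le_natCast {q : ℤ} (hq : 0 ≤ q) (n : ℕ) : Hz q n ≤ n :=
  calc Hz q n ≤ ∑ _x ∈ Finset.Icc 1 n, (1 : ℚ) := Finset.sum_le_sum fun x hx =>
        zpow_le_one_of_nonpos₀ (by exact_mod_cast (Finset.mem_Icc.1 hx).1) (by omega)
    _ = n := by simp

lemma Hz_le_harmonic {q : ℤ} (hq : 1 ≤ q) (n : ℕ) : Hz q n ≤ harmonic n := by
  rw [harmonic_eq_sum_Icc]
  refine Finset.sum_le_sum fun x hx => ?_
  have hx1 : (1 : ℚ) ≤ x := by exact_mod_cast (Finset.mem_Icc.1 hx).1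
  calc (x : ℚ) ^ (-q) ≤ (x : ℚ) ^ (-1 : ℤ) := zpow_le_zpow_right₀ hx1 (by omega)
    _ = (x : ℚ)⁻¹ := zpow_neg_one _

lemma Hz_le_rpow_half {q : ℤ} (hq : 1 ≤ q) (n : ℕ) :
    ((Hz q n : ℚ) : ℝ) ≤ 1 + 2 * (n : ℝ) ^ (1 / 2 : ℝ) :=
  calc ((Hz q n : ℚ) : ℝ) ≤ harmonic n := by exact_mod_cast Hz_le_harmonic hq n
    _ ≤ 1 + Real.log n := harmonic_le_one_add_log n
    _ ≤ 1 + 2 * (n : ℝ) ^ (1 / 2 : ℝ) := by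
      have := Real.log_natCast_le_rpow_div n (ε := 1 / 2) (by norm_num)
      linarith

lemma summable_div_pow_of_le_rpow {a : ℕ → ℝ} {C r : ℝ} {s : ℕ} (ha : ∀ n, 0 ≤ a n)
    (hC : ∀ n, a n ≤ C * ((n : ℝ) + 1) ^ r) (hrs : r + 1 < s) :
    Summable fun n => a n / ((n : ℝ) + 1) ^ s := by
  have hpow : Summable fun n : ℕ => C * ((n : ℝ) + 1) ^ (r - s) := by
    refine Summable.mul_left C ?_
    have := (summable_nat_add_iff 1).2 (Real.summable_nat_rpow.2 (by linarith : r - s < -1))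
    simpa using this
  refine hpow.of_nonneg_of_le (fun n => div_nonneg (ha n) (by positivity)) fun n => ?_
  have hn : (0 : ℝ) < n + 1 := by positivity
  rw [Real.rpow_sub hn, Real.rpow_natCast, ← mul_div_assoc]
  exact div_le_div_of_nonneg_right (hC n) (by positivity)

lemma Hpr_one (p n : ℕ) : Hpr p 1 n = Hz p n := by
  simp only [Hpr, Hz, zpow_neg, zpow_natCast, one_div]

lemma Hpr_two_eq_sub (p n : ℕ) :
    Hpr p 2 n = ((n : ℚ) + 1) * Hz p n - Hz ((p : ℤ) - 1) n := by
  induction n with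
  | zero => simp [Hpr, Hz]
  | succ n ih =>
    have hstep : Hpr p 2 (n + 1) = Hpr p 2 n + Hpr p 1 (n + 1) :=
      Finset.sum_Icc_succ_top (Nat.le_add_left 1 n) _
    have hpow : ((n + 1 : ℕ) : ℚ) ^ (-((p : ℤ) - 1)) =
        (n + 1 : ℚ) * ((n + 1 : ℕ) : ℚ) ^ (-(p : ℤ)) := by
      rw [neg_sub, sub_eq_add_neg, zpow_add₀ (by positivity), zpow_one]
      push_cast
      ring
    rw [hstep, ih, Hpr_one, Hz_succ, Hz_succ, hpow]
    push_cast
    ring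

noncomputable def eulerTerm (q : ℤ) (s n : ℕ) : ℝ :=
  ((Hz q (n + 1) : ℚ) : ℝ) / (n + 1 : ℝ) ^ s

lemma summable_eulerTerm_of_one_le {q : ℤ} (hq : 1 ≤ q) {s : ℕ} (hs : 2 ≤ s) :
    Summable (eulerTerm q s) := by
  refine summable_div_pow_of_le_rpow (C := 3) (r := 1 / 2)
    (fun n => by exact_mod_cast Hz_nonneg q _)
    (fun n => ?_) (by linarith [show (2 : ℝ) ≤ s by exact_mod_cast hs])
  have h := Hz_le_rpow_half hq (n + 1)
  have h1 : (1 : ℝ) ≤ ((n : ℝ) + 1) ^ (1 / 2 : ℝ) :=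
    Real.one_le_rpow (by linarith [n.cast_nonneg (α := ℝ)]) (by norm_num)
  push_cast at h
  linarith

lemma summable_eulerTerm_of_nonneg {q : ℤ} (hq : 0 ≤ q) {s : ℕ} (hs : 3 ≤ s) :
    Summable (eulerTerm q s) := by
  refine summable_div_pow_of_le_rpow (C := 1) (r := 1)
    (fun n => by exact_mod_cast Hz_nonneg q _)
    (fun n => ?_) (by norm_num; exact_mod_cast hs)
  have h := Hz_le_natCast hq (n + 1)
  rw [one_mul, Real.rpow_one]
  exact_mod_cast h

lemma Hpr_two_div_pow (p : ℕ) {m : ℕ} (hm : 1 ≤ m) (n : ℕ) :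
    ((Hpr p 2 (n + 1) : ℚ) : ℝ) / (n + 1 : ℝ) ^ m =
      eulerTerm p m n + eulerTerm p (m - 1) n - eulerTerm ((p : ℤ) - 1) m n := by
  obtain ⟨k, rfl⟩ := Nat.exists_eq_add_of_le' hm
  simp only [eulerTerm, Hpr_two_eq_sub, Nat.add_sub_cancel]
  push_cast
  field_simp
  ring

theorem euler_sum_Hpr_two (p m : ℕ) (hp : 1 ≤ p) (hm : 3 ≤ m) :
    ∑' n : ℕ, ((Hpr p 2 (n + 1) : ℚ) : ℝ) / (n + 1 : ℝ) ^ m =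
      S (p : ℤ) m + S (p : ℤ) (m - 1) - S ((p : ℤ) - 1) m := by
  have hp' : (1 : ℤ) ≤ p := by exact_mod_cast hp
  have h₁ := summable_eulerTerm_of_one_le hp' (s := m) (by omega)
  have h₂ := summable_eulerTerm_of_one_le hp' (s := m - 1) (by omega)
  have h₃ := summable_eulerTerm_of_nonneg (q := (p : ℤ) - 1) (by omega) hm
  rw [tsum_congr (Hpr_two_div_pow p (by omega)), (h₁.add h₂).tsum_sub h₃, h₁.tsum_add h₂]
  rfl
end
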